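/- arXiv:1904.00266 — 2 statements merged into one kernel-verified Lean document; each statement's English description precedes it below -/
import Mathlib

section
/- There exists a partition of [ℕ]^ω (the infinite subsets of ℕ) into two pieces such that for every infinite X ⊆ ℕ, the set [X]^ω of infinite subsets of X intersects both pieces. (Equivalently, there is a non-Ramsey subset of [ℕ]^ω.) -/
/-!
Choose, by the axiom of choice, a representative in each class of sets modulo finite
symmetric difference, and put a set into `𝒳` when it differs from its representative in an
even number of points. Toggling one point of a set keeps its class but changes that parity,
so an infinite `X` and `X \ {y}`, for any `y ∈ X`, lie on opposite sides of `𝒳`.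
-/

open scoped symmDiff

lemma Set.Finite.even_ncard_symmDiff_singleton_iff {α : Type*} {s : Set α} (hs : s.Finite)
    (a : α) : Even (s ∆ {a}).ncard ↔ ¬Even s.ncard := by
  by_cases ha : a ∈ s
  · rw [symmDiff_of_ge (Set.singleton_subset_iff.2 ha),
      ← Set.ncard_sdiff_singleton_add_one ha hs, Nat.even_add_one, not_not]
  · have hins : s ∆ {a} = insert a s :=
      (Set.disjoint_singleton_right.2 ha).symmDiff_eq_sup.trans Set.union_singleton
    rw [hins, Set.ncard_insert_of_notMem ha hs, Nat.even_add_one]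

namespace FiniteSymmDiff

variable {α : Type*}

def setoid (α : Type*) : Setoid (Set α) where
  r s t := (s ∆ t).Finite
  iseqv :=
    ⟨fun s => by simp, fun h => by rwa [symmDiff_comm],
      fun h₁ h₂ => (h₁.union h₂).subset (symmDiff_triangle _ _ _)⟩

noncomputable def rep (s : Set α) : Set α :=
  (Quotient.mk (setoid α) s).out

lemma rep_eq_of_finite {s t : Set α} (h : (s ∆ t).Finite) : rep s = rep t :=
  congrArg Quotient.out (Quotient.sound h)

lemma finite_symmDiff_rep (s : Set α) : (s ∆ rep s).Finite := by
  rw [symmDiff_comm]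
  exact Quotient.mk_out (s := setoid α) s

def evenFromRep (α : Type*) : Set (Set α) :=
  {s | Even (s ∆ rep s).ncard}

lemma symmDiff_singleton_mem_evenFromRep_iff (s : Set α) (a : α) :
    s ∆ {a} ∈ evenFromRep α ↔ s ∉ evenFromRep α := by
  have hrep : rep (s ∆ {a}) = rep s :=
    rep_eq_of_finite (by rw [symmDiff_symmDiff_self']; exact Set.finite_singleton a)
  simp only [evenFromRep, Set.mem_ofPred_eq, hrep, symmDiff_right_comm s {a}]
  exact (finite_symmDiff_rep s).even_ncard_symmDiff_singleton_iff a

theorem exists_infinite_subsets_mem_and_not_mem_evenFromRep {X : Set α} (hX : X.Infinite) :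
    (∃ Y ⊆ X, Y.Infinite ∧ Y ∈ evenFromRep α) ∧ (∃ Y ⊆ X, Y.Infinite ∧ Y ∉ evenFromRep α) := by
  obtain ⟨a, ha⟩ := hX.nonempty
  have hdiff : X ∆ {a} = X \ {a} := symmDiff_of_ge (Set.singleton_subset_iff.2 ha)
  have hsub : X ∆ {a} ⊆ X := hdiff ▸ Set.sdiff_subset
  have hinf : (X ∆ {a}).Infinite := hdiff ▸ hX.sdiff (Set.finite_singleton a)
  have hflip := symmDiff_singleton_mem_evenFromRep_iff X a
  by_cases hmem : X ∈ evenFromRep α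
  · exact ⟨⟨X, subset_rfl, hX, hmem⟩, ⟨X ∆ {a}, hsub, hinf, fun h => hflip.1 h hmem⟩⟩
  · exact ⟨⟨X ∆ {a}, hsub, hinf, hflip.2 hmem⟩, ⟨X, subset_rfl, hX, hmem⟩⟩

end FiniteSymmDiff

/-- There is a partition of the infinite subsets of `ℕ` into two pieces
(equivalently, a subset `𝒳` of `[ℕ]^ω` and its complement) such that for
every infinite `X ⊆ ℕ`, the family `[X]^ω` of infinite subsets of `X`
meets both pieces; i.e. there is a non-Ramsey set. -/
theorem exists_non_ramsey_set :
    ∃ 𝒳 : Set (Set ℕ), ∀ X : Set ℕ, X.Infinite →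
      (∃ Y : Set ℕ, Y ⊆ X ∧ Y.Infinite ∧ Y ∈ 𝒳) ∧
      (∃ Y : Set ℕ, Y ⊆ X ∧ Y.Infinite ∧ Y ∉ 𝒳) :=
  ⟨FiniteSymmDiff.evenFromRep ℕ, fun _ hX =>
    FiniteSymmDiff.exists_infinite_subsets_mem_and_not_mem_evenFromRep hX⟩
end

section
/- Every Borel subset of the Baire space [ℕ]^ω is completely Ramsey: for each finite set s of natural numbers and infinite X ⊆ ℕ with s an initial segment of X, there is an infinite Y with s ⊑ Y ⊆ X such that the set [s,Y] = {Z ∈ [Y]^ω : s ⊑ Z} is either contained in the given Borel set or disjoint from it. -/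
/-- `s` is an initial segment of `X`: `s ⊆ X` and every element of `X`
not in `s` is greater than every element of `s`. -/
def InitSeg (s : Finset ℕ) (X : Set ℕ) : Prop :=
  ↑s ⊆ X ∧ ∀ x ∈ X, x ∉ s → ∀ a ∈ s, a < x

/-- The Baire space `[ℕ]^ω` of infinite subsets of `ℕ`. -/
abbrev BaireSp := {X : Set ℕ // X.Infinite}

/-- The metric (Baire space) topology on `[ℕ]^ω`, generated by the cones
`{X : s ⊑ X}` for finite `s`. -/
def baireTop : TopologicalSpace BaireSp :=
  .generateFrom {U | ∃ s : Finset ℕ, U = {X : BaireSp | InitSeg s X.1}}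

/-- The Ellentuck-style basic set `[s, Y] = {Z ∈ [Y]^ω : s ⊑ Z}`. -/
def baireCube (s : Finset ℕ) (Y : BaireSp) : Set BaireSp :=
  {Z : BaireSp | Z.1 ⊆ Y.1 ∧ InitSeg s Z.1}

/-!
Open sets are completely Ramsey by the accept/reject argument: a fusion makes `B` accept or
reject every `t ⊆ s ∪ B`; if `B` rejects `s`, a second fusion removes, above each rejected `t`,
the finitely many `b` for which `B` accepts `insert b t`, leaving `C` such that `B` rejects every
`s ∪ u` with `u ⊆ C`, so that `[s, C]` misses the open set. Complements are immediate. For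
`⋃ 𝒳ₙ`, fuse so that `[t, B]` decides `𝒳ₙ` for all `n ≤ max t`, and apply the open case to the
set of `Z` with an initial segment `t ⊇ s` such that `[t, B] ⊆ ⋃ 𝒳ₙ`. So the completely Ramsey
sets form a σ-algebra containing the open sets.
-/

open Set

section InitSeg

variable {s t : Finset ℕ} {Y Z W : Set ℕ}

theorem initSeg_empty (Z : Set ℕ) : InitSeg ∅ Z :=
  ⟨by simp, fun _ _ _ a ha => absurd ha (Finset.notMem_empty a)⟩

theorem InitSeg.mono (h : InitSeg t Z) (htY : ↑t ⊆ Y) (hYZ : Y ⊆ Z) : InitSeg t Y :=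
  ⟨htY, fun x hx => h.2 x (hYZ hx)⟩

theorem InitSeg.trans (hst : InitSeg s ↑t) (htW : InitSeg t W) : InitSeg s W := by
  refine ⟨hst.1.trans htW.1, fun x hxW hxs a ha => ?_⟩
  by_cases hxt : x ∈ t
  · exact hst.2 x hxt hxs a ha
  · exact htW.2 x hxW hxt a (Finset.coe_subset.1 hst.1 ha)

theorem InitSeg.union (hs : InitSeg s Z) (ht : InitSeg t Z) : InitSeg (s ∪ t) Z := by
  refine ⟨by simpa using union_subset hs.1 ht.1, fun x hx hxst a ha => ?_⟩
  rw [Finset.mem_union, not_or] at hxst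
  rcases Finset.mem_union.1 ha with ha | ha
  · exact hs.2 x hx hxst.1 a ha
  · exact ht.2 x hx hxst.2 a ha

theorem InitSeg.insert_sInf (h : InitSeg t Z) (hne : (Z \ ↑t).Nonempty) :
    InitSeg (insert (sInf (Z \ ↑t)) t) Z := by
  have hmem : sInf (Z \ ↑t) ∈ Z \ ↑t := Nat.sInf_mem hne
  refine ⟨by simpa using insert_subset hmem.1 h.1, fun x hx hxt a ha => ?_⟩
  rw [Finset.mem_insert, not_or] at hxt
  rcases Finset.mem_insert.1 ha with rfl | ha
  · exact (Nat.sInf_le (show x ∈ Z \ ↑t from ⟨hx, hxt.2⟩)).lt_of_ne' hxt.1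
  · exact h.2 x hx hxt.2 a ha

theorem exists_initSeg_superset_le_sup (hZ : Z.Infinite) (hsZ : ↑s ⊆ Z) (N : ℕ) :
    ∃ t, InitSeg t Z ∧ s ⊆ t ∧ N ≤ t.sup id := by
  classical
  obtain ⟨z, hzZ, hz⟩ := hZ.exists_gt (max N (s.sup id))
  have hz' : N < z ∧ s.sup id < z := max_lt_iff.1 hz
  refine ⟨(Finset.range (z + 1)).filter (· ∈ Z), ⟨fun x hx => (Finset.mem_filter.1 hx).2,
    fun x hx hxt a ha => ?_⟩, fun a ha => ?_, ?_⟩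
  · simp only [Finset.mem_filter, Finset.mem_range, hx, and_true] at ha hxt
    omega
  · have : a ≤ s.sup id := Finset.le_sup (f := id) ha
    simp only [Finset.mem_filter, Finset.mem_range]
    exact ⟨by omega, hsZ ha⟩
  · exact hz'.1.le.trans (Finset.le_sup (f := id) (by simpa using hzZ))

end InitSeg

namespace GalvinPrikry

def above (t : Finset ℕ) : Set ℕ := {x | ∀ a ∈ t, a < x}

theorem _root_.Set.Infinite.inter_above {S : Set ℕ} (hS : S.Infinite) (t : Finset ℕ) :
    (S ∩ above t).Infinite :=
  (hS.sdiff (finite_Iic (t.sup id))).mono fun _ hx =>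
    ⟨hx.1, fun _ ha => (Finset.le_sup (f := id) ha).trans_lt (not_le.1 hx.2)⟩

theorem initSeg_union_of_subset_above {t : Finset ℕ} {Y : Set ℕ} (hY : Y ⊆ above t) :
    InitSeg t (↑t ∪ Y) :=
  ⟨subset_union_left, fun _ hx hxt => hY (hx.resolve_left hxt)⟩

/-- Ellentuck's `[t, S]`; only the part of `S` above `t` matters. -/
def cube (t : Finset ℕ) (S : Set ℕ) : Set BaireSp :=
  {Z | InitSeg t Z.1 ∧ Z.1 ⊆ ↑t ∪ S}

theorem cube_subset_cube {t : Finset ℕ} {S T : Set ℕ} (h : T ∩ above t ⊆ S) :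
    cube t T ⊆ cube t S := by
  refine fun Z hZ => ⟨hZ.1, fun x hx => ?_⟩
  by_cases hxt : x ∈ t
  · exact Or.inl hxt
  · exact Or.inr (h ⟨(hZ.2 hx).resolve_left hxt, hZ.1.2 x hx hxt⟩)

theorem cube_mono {t : Finset ℕ} {S T : Set ℕ} (h : T ⊆ S) : cube t T ⊆ cube t S :=
  cube_subset_cube (inter_subset_left.trans h)

theorem baireCube_eq_cube {s : Finset ℕ} {B : Set ℕ} (hY : (↑s ∪ (B ∩ above s)).Infinite) :
    baireCube s ⟨↑s ∪ (B ∩ above s), hY⟩ = cube s B :=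
  Subset.antisymm (fun _ hZ => cube_mono inter_subset_left ⟨hZ.2, hZ.1⟩)
    (fun _ hZ => (cube_subset_cube subset_rfl hZ).symm)

theorem exists_subset_forall_mem {α ι : Type*} {P : ι → Set α → Prop}
    (hP : ∀ i {S T}, T ⊆ S → P i S → P i T)
    (hdense : ∀ i S, S.Infinite → ∃ T ⊆ S, T.Infinite ∧ P i T)
    (I : Finset ι) {S : Set α} (hS : S.Infinite) :
    ∃ T ⊆ S, T.Infinite ∧ ∀ i ∈ I, P i T := by
  classical
  induction I using Finset.induction_on generalizing S with
  | empty => exact ⟨S, subset_rfl, hS, by simp⟩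
  | insert i I _ ih =>
    obtain ⟨T, hTS, hT, hTI⟩ := ih hS
    obtain ⟨T', hT'T, hT', hT'i⟩ := hdense i T hT
    refine ⟨T', hT'T.trans hTS, hT', ?_⟩
    simp only [Finset.mem_insert, forall_eq_or_imp]
    exact ⟨hT'i, fun j hj => hP j hT'T (hTI j hj)⟩

theorem exists_subset_forall_subset {D : Finset ℕ → Set ℕ → Prop}
    (hmono : ∀ t {S T}, T ∩ above t ⊆ S → D t S → D t T)
    (hdense : ∀ t S, S.Infinite → ∃ T ⊆ S, T.Infinite ∧ D t T)
    (u : Finset ℕ) {S : Set ℕ} (hS : S.Infinite) :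
    ∃ T ⊆ S, T.Infinite ∧ ∀ t ⊆ u, D t T := by
  obtain ⟨T, hTS, hT, hDT⟩ := exists_subset_forall_mem
    (fun t _ _ h => hmono t (inter_subset_left.trans h)) hdense u.powerset hS
  exact ⟨T, hTS, hT, fun t ht => hDT t (Finset.mem_powerset.2 ht)⟩

/-- Fusion: `B = {c₀ < c₁ < ⋯}` where `c n = min Xₙ` for a decreasing sequence `Xₙ ⊆ A`
such that `Xₙ` satisfies `D t` for every `t ⊆ s ∪ [0, cₙ₋₁]`; the part of `B` above
`t` then lies in `Xₙ` for the first `n` with `cₙ` above `t`. -/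
theorem exists_fusion {D : Finset ℕ → Set ℕ → Prop}
    (hmono : ∀ t {S T}, T ∩ above t ⊆ S → D t S → D t T)
    (hdense : ∀ t S, S.Infinite → ∃ T ⊆ S, T.Infinite ∧ D t T)
    (s : Finset ℕ) {A : Set ℕ} (hA : A.Infinite) :
    ∃ B ⊆ A, B.Infinite ∧ ∀ t : Finset ℕ, ↑t ⊆ ↑s ∪ B → D t B := by
  classical
  have hstep : ∀ S : {S : Set ℕ // S.Infinite}, ∃ T : {S : Set ℕ // S.Infinite},
      T.1 ⊆ S.1 \ Iic (sInf S.1) ∧ ∀ t ⊆ s ∪ Finset.range (sInf S.1 + 1), D t T.1 := by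
    rintro ⟨S, hS⟩
    obtain ⟨T, hTS, hT, hDT⟩ := exists_subset_forall_subset hmono hdense
      (s ∪ Finset.range (sInf S + 1)) (hS.sdiff (finite_Iic (sInf S)))
    exact ⟨⟨T, hT⟩, hTS, hDT⟩
  choose G hGsub hGD using hstep
  set X : ℕ → {S : Set ℕ // S.Infinite} := fun n => G^[n + 1] ⟨A, hA⟩
  set c : ℕ → ℕ := fun n => sInf (X n).1
  have hX_succ : ∀ n, X (n + 1) = G (X n) := fun n => Function.iterate_succ_apply' G (n + 1) _
  have hc_mem : ∀ n, c n ∈ (X n).1 := fun n => Nat.sInf_mem (X n).2.nonempty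
  have hX_anti : Antitone fun n => (X n).1 := antitone_nat_of_succ_le fun n => by
    rw [hX_succ]
    exact (hGsub _).trans sdiff_subset
  have hc_mono : StrictMono c := strictMono_nat_of_lt_succ fun n => by
    simpa using ((hGsub (X n)) (hX_succ n ▸ hc_mem (n + 1))).2
  have hXD : ∀ n t, (∀ x ∈ t, x ∉ s → ∃ j < n, c j = x) → D t (X n).1 := by
    rintro (_ | n) t ht
    · refine hGD _ t fun x hx => Finset.mem_union_left _ ?_
      by_contra hxs
      obtain ⟨j, hj, -⟩ := ht x hx hxs
      exact absurd hj (Nat.not_lt_zero j)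
    · rw [hX_succ]
      refine hGD _ t fun x hx => ?_
      by_cases hxs : x ∈ s
      · exact Finset.mem_union_left _ hxs
      obtain ⟨j, hj, rfl⟩ := ht x hx hxs
      exact Finset.mem_union_right _ (Finset.mem_range.2 (Nat.lt_succ_of_le
        (hc_mono.monotone (Nat.le_of_lt_succ hj))))
  refine ⟨range c, ?_, infinite_range_of_injective hc_mono.injective, fun t ht => ?_⟩
  · rintro _ ⟨n, rfl⟩
    exact ((hGsub _).trans sdiff_subset) (hX_anti (Nat.zero_le n) (hc_mem n))
  have hex : ∃ n, c n ∈ above t := ⟨t.sup id + 1, fun a ha =>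
    (Finset.le_sup (f := id) ha).trans_lt (hc_mono.id_le _)⟩
  refine hmono t ?_ (hXD (Nat.find hex) t fun x hx hxs => ?_)
  · rintro _ ⟨⟨j, rfl⟩, hj⟩
    exact hX_anti (Nat.find_min' hex hj) (hc_mem j)
  · obtain ⟨j, rfl⟩ := (ht hx).resolve_left hxs
    exact ⟨j, hc_mono.lt_iff_lt.1 (Nat.find_spec hex _ hx), rfl⟩

def Decides (𝒳 : Set BaireSp) (t : Finset ℕ) (S : Set ℕ) : Prop :=
  cube t S ⊆ 𝒳 ∨ Disjoint (cube t S) 𝒳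

theorem Decides.mono {𝒳 : Set BaireSp} {t : Finset ℕ} {S T : Set ℕ} (h : T ∩ above t ⊆ S)
    (hS : Decides 𝒳 t S) : Decides 𝒳 t T :=
  hS.imp (cube_subset_cube h).trans (Disjoint.mono_left (cube_subset_cube h))

theorem Decides.compl {𝒳 : Set BaireSp} {t : Finset ℕ} {S : Set ℕ} (h : Decides 𝒳 t S) :
    Decides 𝒳ᶜ t S := by
  rw [Decides, subset_compl_iff_disjoint_right, disjoint_compl_right_iff_subset]
  exact h.symm

def IsCompletelyRamsey (𝒳 : Set BaireSp) : Prop :=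
  ∀ (s : Finset ℕ) (A : Set ℕ), A.Infinite → ∃ B ⊆ A, B.Infinite ∧ Decides 𝒳 s B

/-- In the accept/reject terminology, `S` accepts `t` when `cube t S ⊆ 𝒳`. -/
def Rejects (𝒳 : Set BaireSp) (S : Set ℕ) (t : Finset ℕ) : Prop :=
  ∀ T ⊆ S, T.Infinite → ¬ cube t T ⊆ 𝒳

section Rejects

variable {𝒳 : Set BaireSp} {s t : Finset ℕ} {B S T : Set ℕ}

theorem Rejects.mono (h : T ∩ above t ⊆ S) (hS : Rejects 𝒳 S t) : Rejects 𝒳 T t :=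
  fun T' hT' hinf hacc => hS (T' ∩ above t) ((inter_subset_inter_left _ hT').trans h)
    (hinf.inter_above t) ((cube_mono inter_subset_left).trans hacc)

theorem exists_subset_accepts_or_rejects (t : Finset ℕ) (hS : S.Infinite) :
    ∃ T ⊆ S, T.Infinite ∧ (cube t T ⊆ 𝒳 ∨ Rejects 𝒳 T t) := by
  by_cases h : Rejects 𝒳 S t
  · exact ⟨S, subset_rfl, hS, Or.inr h⟩
  · simp only [Rejects, not_forall, not_not] at h
    obtain ⟨T, hTS, hT, hacc⟩ := h
    exact ⟨T, hTS, hT, Or.inl hacc⟩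

/-- If `Z ∈ cube t E`, where `B` accepts `insert b t` for all `b ∈ E`, then `B` accepts
`insert b t` for the least `b ∈ Z \ t`, and `Z` lies in that cube. -/
theorem Rejects.finite_accepts_insert (h : Rejects 𝒳 B t) :
    {b ∈ B | cube (insert b t) B ⊆ 𝒳}.Finite := by
  by_contra hinf
  refine h _ (sep_subset _ _) hinf fun Z hZ => ?_
  have hne : (Z.1 \ ↑t).Nonempty := (Z.2.sdiff t.finite_toSet).nonempty
  have hb : sInf (Z.1 \ ↑t) ∈ {b ∈ B | cube (insert b t) B ⊆ 𝒳} :=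
    (hZ.2 (Nat.sInf_mem hne).1).resolve_left (Nat.sInf_mem hne).2
  refine hb.2 ⟨hZ.1.insert_sInf hne, hZ.2.trans (union_subset_union ?_ (sep_subset _ _))⟩
  rw [Finset.coe_insert]
  exact subset_insert _ _

theorem exists_subset_rejects_union (hB : B.Infinite) (hBs : B ⊆ above s)
    (hdec : ∀ t : Finset ℕ, ↑t ⊆ ↑s ∪ B → cube t B ⊆ 𝒳 ∨ Rejects 𝒳 B t)
    (hs : Rejects 𝒳 B s) :
    ∃ C ⊆ B, C.Infinite ∧ ∀ u : Finset ℕ, ↑u ⊆ C → Rejects 𝒳 B (s ∪ u) := by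
  classical
  have hdense : ∀ t S, S.Infinite → ∃ T ⊆ S, T.Infinite ∧
      (Rejects 𝒳 B t → ∀ b ∈ T ∩ above t, b ∈ B → ¬ cube (insert b t) B ⊆ 𝒳) := by
    intro t S hS
    by_cases ht : Rejects 𝒳 B t
    · exact ⟨S \ {b ∈ B | cube (insert b t) B ⊆ 𝒳}, sdiff_subset,
        hS.sdiff ht.finite_accepts_insert, fun _ b hb hbB hacc => hb.1.2 ⟨hbB, hacc⟩⟩
    · exact ⟨S, subset_rfl, hS, fun h => absurd h ht⟩
  obtain ⟨C, hCB, hC, hCD⟩ := exists_fusion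
    (fun t S T h hS ht b hb => hS ht b ⟨h hb, hb.2⟩) hdense s hB
  refine ⟨C, hCB, hC, fun u => ?_⟩
  induction u using Finset.induction_on_max with
  | empty => simpa using hs
  | insert a u hua ih =>
    intro hau
    rw [Finset.coe_insert, insert_subset_iff] at hau
    have ha : a ∈ C ∩ above (s ∪ u) := ⟨hau.1, fun x hx =>
      (Finset.mem_union.1 hx).elim (hBs (hCB hau.1) x) (hua x)⟩
    have hsu : ↑(s ∪ u) ⊆ ↑s ∪ C := by
      rw [Finset.coe_union]
      exact union_subset_union_right _ hau.2
    have hsau : ↑(insert a (s ∪ u)) ⊆ ↑s ∪ B := by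
      rw [Finset.coe_insert]
      exact insert_subset (Or.inr (hCB hau.1)) (hsu.trans (union_subset_union_right _ hCB))
    rw [Finset.union_insert]
    exact (hdec _ hsau).resolve_left (hCD _ hsu (ih hau.2) a ha (hCB hau.1))

end Rejects

section Topology

attribute [local instance] baireTop

theorem isOpen_setOf_exists_initSeg (P : Finset ℕ → Prop) :
    IsOpen {Z : BaireSp | ∃ t, P t ∧ InitSeg t Z.1} := by
  have : {Z : BaireSp | ∃ t, P t ∧ InitSeg t Z.1} = ⋃ t ∈ {t | P t}, {Z | InitSeg t Z.1} := by
    ext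
    simp
  rw [this]
  exact isOpen_biUnion fun t _ => TopologicalSpace.isOpen_generateFrom_of_mem ⟨t, rfl⟩

theorem exists_initSeg_subset_of_isOpen {U : Set BaireSp} (hU : IsOpen U) {Z : BaireSp}
    (hZ : Z ∈ U) : ∃ t, InitSeg t Z.1 ∧ {W : BaireSp | InitSeg t W.1} ⊆ U := by
  induction hU generalizing Z with
  | basic V hV =>
    obtain ⟨t, rfl⟩ := hV
    exact ⟨t, hZ, subset_rfl⟩
  | univ => exact ⟨∅, initSeg_empty _, subset_univ _⟩
  | inter V₁ V₂ _ _ ih₁ ih₂ =>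
    obtain ⟨t₁, h₁, hV₁⟩ := ih₁ hZ.1
    obtain ⟨t₂, h₂, hV₂⟩ := ih₂ hZ.2
    have h₁₂ := h₁.union h₂
    refine ⟨t₁ ∪ t₂, h₁₂, fun W hW => ⟨hV₁ ?_, hV₂ ?_⟩⟩
    · exact (h₁.mono (by simp) h₁₂.1).trans hW
    · exact (h₂.mono (by simp) h₁₂.1).trans hW
  | sUnion 𝒮 _ ih =>
    obtain ⟨V, hV𝒮, hZV⟩ := hZ
    obtain ⟨t, ht, hV⟩ := ih V hV𝒮 hZV
    exact ⟨t, ht, hV.trans (subset_sUnion_of_mem hV𝒮)⟩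

theorem isCompletelyRamsey_of_isOpen {𝒳 : Set BaireSp} (h𝒳 : IsOpen 𝒳) :
    IsCompletelyRamsey 𝒳 := by
  intro s A hA
  obtain ⟨B, hBA, hB, hdec⟩ := exists_fusion
    (D := fun t S => cube t S ⊆ 𝒳 ∨ Rejects 𝒳 S t)
    (fun _ _ _ h => Or.imp (cube_subset_cube h).trans (Rejects.mono h))
    (fun t _ hS => exists_subset_accepts_or_rejects t hS) s (hA.inter_above s)
  obtain hacc | hrej := hdec s subset_union_left
  · exact ⟨B, hBA.trans inter_subset_left, hB, Or.inl hacc⟩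
  obtain ⟨C, hCB, hC, hCrej⟩ :=
    exists_subset_rejects_union hB (hBA.trans inter_subset_right) hdec hrej
  refine ⟨C, hCB.trans (hBA.trans inter_subset_left), hC, Or.inr ?_⟩
  refine disjoint_left.2 fun Z hZ hZ𝒳 => ?_
  obtain ⟨t, htZ, ht𝒳⟩ := exists_initSeg_subset_of_isOpen h𝒳 hZ𝒳
  have hts : ↑(t \ s) ⊆ C := fun x hx =>
    (hZ.2 (htZ.1 (Finset.mem_sdiff.1 hx).1)).resolve_left (Finset.mem_sdiff.1 hx).2
  have hst : InitSeg (s ∪ t) Z.1 := hZ.1.union htZ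
  have hrej := hCrej (t \ s) hts
  rw [Finset.union_sdiff_self_eq_union] at hrej
  -- `B` accepts `s ∪ t`: every `W` with `s ∪ t ⊑ W` has `t ⊑ W`.
  exact hrej B subset_rfl hB fun W hW => ht𝒳 ((htZ.mono (by simp) hst.1).trans hW.1)

theorem IsCompletelyRamsey.iUnion {f : ℕ → Set BaireSp} (hf : ∀ n, IsCompletelyRamsey (f n)) :
    IsCompletelyRamsey (⋃ n, f n) := by
  intro s A hA
  have hdense : ∀ t S, S.Infinite → ∃ T ⊆ S, T.Infinite ∧ ∀ n ≤ t.sup id, Decides (f n) t T := by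
    intro t S hS
    obtain ⟨T, hTS, hT, hTn⟩ := exists_subset_forall_mem (P := fun n T => Decides (f n) t T)
      (fun _ _ _ h => Decides.mono (inter_subset_left.trans h)) (fun n S hS => hf n t S hS)
      (Finset.range (t.sup id + 1)) hS
    exact ⟨T, hTS, hT, fun n hn => hTn n (Finset.mem_range.2 (Nat.lt_succ_of_le hn))⟩
  obtain ⟨B, hBA, hB, hdec⟩ := exists_fusion
    (fun _ _ _ h hS n hn => (hS n hn).mono h) hdense s hA
  obtain ⟨C, hCB, hC, hCY⟩ := isCompletelyRamsey_of_isOpen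
    (isOpen_setOf_exists_initSeg fun t => s ⊆ t ∧ cube t B ⊆ ⋃ n, f n) s B hB
  have hmem : ∀ Z ∈ cube s C, ∀ t, s ⊆ t → InitSeg t Z.1 → Z ∈ cube t B :=
    fun Z hZ t hst htZ => ⟨htZ, hZ.2.trans (union_subset_union (Finset.coe_subset.2 hst) hCB)⟩
  refine ⟨C, hCB.trans hBA, hC, hCY.imp (fun hsub Z hZ => ?_) fun hdisj => ?_⟩
  · obtain ⟨t, ⟨hst, ht⟩, htZ⟩ := hsub hZ
    exact ht (hmem Z hZ t hst htZ)
  refine disjoint_left.2 fun Z hZ hZf => ?_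
  obtain ⟨n, hn⟩ := mem_iUnion.1 hZf
  obtain ⟨t, htZ, hst, hnt⟩ := exists_initSeg_superset_le_sup Z.2 hZ.1.1 n
  rcases hdec t (htZ.1.trans (hZ.2.trans (union_subset_union_right _ hCB))) n hnt with hsub | hdisj'
  · exact disjoint_left.1 hdisj hZ ⟨t, ⟨hst, hsub.trans (subset_iUnion f n)⟩, htZ⟩
  · exact disjoint_left.1 hdisj' (hmem Z hZ t hst htZ) hn

theorem isCompletelyRamsey_of_measurableSet {𝒳 : Set BaireSp}
    (h𝒳 : @MeasurableSet BaireSp (borel BaireSp) 𝒳) : IsCompletelyRamsey 𝒳 := by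
  induction 𝒳, h𝒳 using MeasurableSpace.generateFrom_induction with
  | hC U hU _ => exact isCompletelyRamsey_of_isOpen hU
  | empty => exact fun s A hA => ⟨A, subset_rfl, hA, Or.inr (disjoint_empty _)⟩
  | compl U _ hU => exact fun s A hA => (hU s A hA).imp fun _ ⟨hBA, hB, hdec⟩ => ⟨hBA, hB, hdec.compl⟩
  | iUnion f _ hf => exact IsCompletelyRamsey.iUnion hf

end Topology

end GalvinPrikry

open GalvinPrikry

/-- Galvin–Prikry theorem: every Borel subset of the Baire space `[ℕ]^ω`
is completely Ramsey. -/
theorem galvin_prikry (𝒳 : Set BaireSp)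
    (hBorel : @MeasurableSet BaireSp (@borel BaireSp baireTop) 𝒳) :
    ∀ (s : Finset ℕ) (X : BaireSp), InitSeg s X.1 →
      ∃ Y : BaireSp, Y.1 ⊆ X.1 ∧ InitSeg s Y.1 ∧
        (baireCube s Y ⊆ 𝒳 ∨ baireCube s Y ∩ 𝒳 = ∅) := by
  intro s X hsX
  obtain ⟨B, hBX, hB, hdec⟩ := isCompletelyRamsey_of_measurableSet hBorel s X.1 X.2
  have hY : (↑s ∪ (B ∩ above s)).Infinite := (hB.inter_above s).mono subset_union_right
  refine ⟨⟨_, hY⟩, union_subset hsX.1 (inter_subset_left.trans hBX),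
    initSeg_union_of_subset_above inter_subset_right, ?_⟩
  rw [baireCube_eq_cube, ← disjoint_iff_inter_eq_empty]
  exact hdec
end
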